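/- Let S be a distributive inverse semigroup, and for s ∈ S let X_s denote the set of prime filters of S containing s. Then X_s ⊆ X_t if and only if s ≤ t in the natural partial order; in particular X_s = X_t if and only if s = t. -/

import Mathlib

/-!
If `s ≰ t`, Zorn's lemma gives a filter `F` maximal among those containing `s` but not `t`.
It is proper since `0 ≤ t`. It is prime: if `a ∨ b ∈ F` with `a, b ∉ F`, maximality puts `t`
into the filters generated by `F` and `a`, resp. `F` and `b`, i.e. `c (a⁻¹a) ≤ t` and
`c (b⁻¹b) ≤ t` for some `c ≤ a ∨ b` in `F`. Since `c (a⁻¹a) = a (c⁻¹c)`, distributivity gives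
`c = (a ∨ b)(c⁻¹c) = a (c⁻¹c) ∨ b (c⁻¹c) ≤ t`, so `t ∈ F`.
-/

namespace InvPaper

/-- An inverse semigroup: a regular semigroup whose idempotents commute
(equivalently, each element has a unique generalized inverse `sinv`). -/
class InverseSemigroup (S : Type*) extends Semigroup S where
  sinv : S → S
  mul_sinv_mul : ∀ a : S, a * sinv a * a = a
  sinv_mul_sinv : ∀ a : S, sinv a * a * sinv a = sinv a
  idem_comm : ∀ e f : S, e * e = e → f * f = f → e * f = f * e

open InverseSemigroup

variable {S : Type*}

section Basic
variable [InverseSemigroup S]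

/-- `e` is an idempotent. -/
def idem (e : S) : Prop := e * e = e

/-- The natural partial order: `a ≤ b` iff `a = b * e` for some idempotent `e`. -/
def nle (a b : S) : Prop := ∃ e : S, idem e ∧ a = b * e

/-- `s` and `t` are compatible: `s⁻¹t` and `st⁻¹` are idempotents. -/
def compatible (s t : S) : Prop := idem (sinv s * t) ∧ idem (s * sinv t)

/-- `j` is the join (least upper bound) of `a` and `b` w.r.t. the natural partial order. -/
def isJoin (a b j : S) : Prop :=
  nle a j ∧ nle b j ∧ ∀ c : S, nle a c → nle b c → nle j c

/-- `m` is the meet (greatest lower bound) of `a` and `b`. -/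
def isMeet (a b m : S) : Prop :=
  nle m a ∧ nle m b ∧ ∀ z : S, nle z a → nle z b → nle z m

/-- `j` is the least upper bound of the set `A`. -/
def isJoinSet (A : Set S) (j : S) : Prop :=
  (∀ a ∈ A, nle a j) ∧ ∀ c : S, (∀ a ∈ A, nle a c) → nle j c

/-- A filter: a nonempty, downward-directed, upward-closed subset. -/
def IsFilter (F : Set S) : Prop :=
  F.Nonempty ∧ (∀ a ∈ F, ∀ b ∈ F, ∃ c ∈ F, nle c a ∧ nle c b) ∧
    ∀ a ∈ F, ∀ b : S, nle a b → b ∈ F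

/-- An order ideal: a downward-closed subset. -/
def IsOrderIdeal (A : Set S) : Prop := ∀ x ∈ A, ∀ y : S, nle y x → y ∈ A

end Basic

/-- An inverse semigroup with a (multiplicative) zero element. -/
class InverseSemigroupWithZero (S : Type*) extends InverseSemigroup S, Zero S where
  zmul : ∀ a : S, 0 * a = 0
  mulz : ∀ a : S, a * 0 = 0

section WithZero
variable [InverseSemigroupWithZero S]

/-- A proper filter: a filter not containing `0`. -/
def IsProperFilter (F : Set S) : Prop := IsFilter F ∧ (0 : S) ∉ F

/-- An ultrafilter: a maximal proper filter. -/
def IsUltrafilter (F : Set S) : Prop :=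
  IsProperFilter F ∧ ∀ G : Set S, IsProperFilter G → F ⊆ G → G = F

/-- A prime filter: a proper filter `F` such that whenever a join `a ∨ b` exists and
lies in `F`, then `a ∈ F` or `b ∈ F`. -/
def IsPrimeFilter (F : Set S) : Prop :=
  IsProperFilter F ∧ ∀ a b j : S, isJoin a b j → j ∈ F → a ∈ F ∨ b ∈ F

/-- `d(F) = (F⁻¹F)↑`, the upward closure of `{a⁻¹b : a, b ∈ F}`. -/
def dClosure (F : Set S) : Set S :=
  {x | ∃ a ∈ F, ∃ b ∈ F, nle (InverseSemigroup.sinv a * b) x}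

/-- `r(F) = (FF⁻¹)↑`, the upward closure of `{ab⁻¹ : a, b ∈ F}`. -/
def rClosure (F : Set S) : Set S :=
  {x | ∃ a ∈ F, ∃ b ∈ F, nle (a * InverseSemigroup.sinv b) x}

/-- The product of two filters: `F · G = (FG)↑`. -/
def filterMul (F G : Set S) : Set S :=
  {x | ∃ a ∈ F, ∃ b ∈ G, nle (a * b) x}

/-- `A` is ∨-closed: closed under existing joins of finite nonempty compatible subsets. -/
def IsVeeClosed (A : Set S) : Prop :=
  ∀ Y : Finset S, Y.Nonempty → ↑Y ⊆ A → (∀ a ∈ Y, ∀ b ∈ Y, compatible a b) →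
    ∀ j : S, isJoinSet (↑Y : Set S) j → j ∈ A

/-- The ∨-closure `A^∨`: all existing joins of finite nonempty compatible subsets of `A`. -/
def veeClosure (A : Set S) : Set S :=
  {x | ∃ Y : Finset S, Y.Nonempty ∧ ↑Y ⊆ A ∧ (∀ a ∈ Y, ∀ b ∈ Y, compatible a b) ∧
    isJoinSet (↑Y : Set S) x}

/-- A prime order ideal: if every common lower bound of `a` and `b` lies in `P`,
then `a ∈ P` or `b ∈ P`. -/
def IsPrimeOrderIdeal (P : Set S) : Prop :=
  ∀ a b : S, (∀ z : S, nle z a → nle z b → z ∈ P) → a ∈ P ∨ b ∈ P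

/-- The set of prime filters containing `s`. -/
def Xset (s : S) : Set (Set S) := {F | IsPrimeFilter F ∧ s ∈ F}

end WithZero

/-- A distributive inverse semigroup: compatible pairs have joins and
multiplication distributes over these joins. -/
class DistributiveInverseSemigroup (S : Type*) extends InverseSemigroupWithZero S where
  joins_exist : ∀ a b : S, compatible a b → ∃ j : S, isJoin a b j
  mul_distrib_left : ∀ a b j c : S, compatible a b → isJoin a b j →
    isJoin (c * a) (c * b) (c * j)
  mul_distrib_right : ∀ a b j c : S, compatible a b → isJoin a b j →
    isJoin (a * c) (b * c) (j * c)

/-- A distributive inverse semigroup is Boolean if its idempotents form a generalized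
Boolean algebra: relative complements of idempotents exist. -/
def IsBoolean (S : Type*) [DistributiveInverseSemigroup S] : Prop :=
  ∀ e f : S, idem e → idem f → nle e f →
    ∃ g : S, idem g ∧ e * g = 0 ∧ isJoin e g f

/-- A pseudogroup: an inverse semigroup with joins of all nonempty compatible subsets,
over which multiplication distributes. -/
class Pseudogroup (S : Type*) extends InverseSemigroup S where
  joins_exist : ∀ A : Set S, A.Nonempty → (∀ a ∈ A, ∀ b ∈ A, compatible a b) →
    ∃ j : S, isJoinSet A j
  mul_distrib_left : ∀ (A : Set S) (j c : S), isJoinSet A j →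
    isJoinSet ((c * ·) '' A) (c * j)
  mul_distrib_right : ∀ (A : Set S) (j c : S), isJoinSet A j →
    isJoinSet ((· * c) '' A) (j * c)

section InverseSemigroup
variable [InverseSemigroup S]

lemma idem_sinv_mul_self (a : S) : idem (sinv a * a) := by
  show sinv a * a * (sinv a * a) = sinv a * a
  rw [← mul_assoc, sinv_mul_sinv]

lemma idem_mul_sinv_self (a : S) : idem (a * sinv a) := by
  show a * sinv a * (a * sinv a) = a * sinv a
  rw [← mul_assoc, mul_sinv_mul]

lemma idem.comm {e f : S} (he : idem e) (hf : idem f) : e * f = f * e :=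
  idem_comm e f he hf

lemma idem.mul {e f : S} (he : idem e) (hf : idem f) : idem (e * f) := by
  show e * f * (e * f) = e * f
  calc e * f * (e * f) = e * (f * e) * f := by simp only [mul_assoc]
    _ = e * (e * f) * f := by rw [hf.comm he]
    _ = (e * e) * (f * f) := by simp only [mul_assoc]
    _ = e * f := by rw [he, hf]

lemma idem.conj {e : S} (he : idem e) (t : S) : idem (t * e * sinv t) := by
  show t * e * sinv t * (t * e * sinv t) = t * e * sinv t
  calc t * e * sinv t * (t * e * sinv t) = t * (e * (sinv t * t)) * e * sinv t := by
        simp only [mul_assoc]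
    _ = t * ((sinv t * t) * e) * e * sinv t := by rw [he.comm (idem_sinv_mul_self t)]
    _ = (t * sinv t * t) * (e * e) * sinv t := by simp only [mul_assoc]
    _ = t * e * sinv t := by rw [mul_sinv_mul, he]

lemma sinv_eq_of_mul_mul {a x : S} (hax : a * x * a = a) (hxa : x * a * x = x) :
    sinv a = x := by
  have hay : idem (a * sinv a) := idem_mul_sinv_self a
  have hya : idem (sinv a * a) := idem_sinv_mul_self a
  have hax' : idem (a * x) := by show a * x * (a * x) = a * x; rw [← mul_assoc, hax]
  have hxa' : idem (x * a) := by show x * a * (x * a) = x * a; rw [← mul_assoc, hxa]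
  -- both `sinv a` and `x` equal `x a (sinv a)`
  calc sinv a = sinv a * a * sinv a := (sinv_mul_sinv a).symm
    _ = sinv a * (a * x * a) * sinv a := by rw [hax]
    _ = (sinv a * a) * (x * a) * sinv a := by simp only [mul_assoc]
    _ = (x * a) * (sinv a * a) * sinv a := by rw [hya.comm hxa']
    _ = x * a * (sinv a * a * sinv a) := by simp only [mul_assoc]
    _ = (x * a * x) * a * sinv a := by rw [sinv_mul_sinv, hxa]
    _ = x * ((a * x) * (a * sinv a)) := by simp only [mul_assoc]
    _ = x * ((a * sinv a) * (a * x)) := by rw [hax'.comm hay]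
    _ = x * (a * sinv a * a) * x := by simp only [mul_assoc]
    _ = x := by rw [mul_sinv_mul, hxa]

lemma idem.mul_mul_sinv_mul_self {e : S} (he : idem e) (t : S) :
    t * e * (sinv t * t) = t * e := by
  rw [mul_assoc, he.comm (idem_sinv_mul_self t), ← mul_assoc, ← mul_assoc, mul_sinv_mul]

lemma sinv_mul_idem (t : S) {e : S} (he : idem e) : sinv (t * e) = e * sinv t := by
  have hg := idem_sinv_mul_self t
  apply sinv_eq_of_mul_mul
  · calc t * e * (e * sinv t) * (t * e) = t * (e * e) * (sinv t * t) * e := by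
          simp only [mul_assoc]
      _ = t * e := by rw [he, he.mul_mul_sinv_mul_self, mul_assoc, he]
  · calc e * sinv t * (t * e) * (e * sinv t) = e * ((sinv t * t) * (e * e)) * sinv t := by
          simp only [mul_assoc]
      _ = e * (e * (sinv t * t * sinv t)) := by rw [he, ← he.comm hg]; simp only [mul_assoc]
      _ = e * sinv t := by rw [← mul_assoc e e, he, sinv_mul_sinv]

lemma nle_refl (a : S) : nle a a :=
  ⟨sinv a * a, idem_sinv_mul_self a, by rw [← mul_assoc, mul_sinv_mul]⟩

lemma nle.trans {a b c : S} (hab : nle a b) (hbc : nle b c) : nle a c := by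
  obtain ⟨e, he, rfl⟩ := hab
  obtain ⟨f, hf, rfl⟩ := hbc
  exact ⟨f * e, hf.mul he, mul_assoc c f e⟩

lemma nle_mul_of_idem (t : S) {e : S} (he : idem e) : nle (t * e) t :=
  ⟨e, he, rfl⟩

lemma nle.mul_idem {a b e : S} (hab : nle a b) (he : idem e) : nle (a * e) (b * e) := by
  obtain ⟨f, hf, rfl⟩ := hab
  exact ⟨f, hf, by rw [mul_assoc, hf.comm he, ← mul_assoc]⟩

lemma nle.antisymm {s t : S} (hst : nle s t) (hts : nle t s) : s = t := by
  obtain ⟨e, he, hs⟩ := hst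
  obtain ⟨f, hf, ht⟩ := hts
  have hefe : t * e * f = t := by rw [← hs, ← ht]
  calc s = t * e * f * e := by rw [hefe, hs]
    _ = t * (e * (f * e)) := by simp only [mul_assoc]
    _ = t * (e * (e * f)) := by rw [hf.comm he]
    _ = t * (e * e) * f := by simp only [mul_assoc]
    _ = t := by rw [he, hefe]

lemma nle.mul_sinv_mul_self_eq {s t : S} (h : nle s t) : t * (sinv s * s) = s := by
  obtain ⟨e, he, rfl⟩ := h
  rw [sinv_mul_idem t he]
  calc t * (e * sinv t * (t * e)) = t * e * (sinv t * t) * e := by simp only [mul_assoc]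
    _ = t * e := by rw [he.mul_mul_sinv_mul_self, mul_assoc, he]

lemma compatible_of_nle_of_nle {a b j : S} (ha : nle a j) (hb : nle b j) : compatible a b := by
  obtain ⟨e, he, rfl⟩ := ha
  obtain ⟨f, hf, rfl⟩ := hb
  rw [compatible, sinv_mul_idem j he, sinv_mul_idem j hf]
  constructor
  · have h := he.mul ((idem_sinv_mul_self j).mul hf)
    simpa only [mul_assoc] using h
  · have h := (he.mul hf).conj j
    simpa only [mul_assoc] using h

lemma mul_sinv_mul_self_comm_of_nle {a c j : S} (ha : nle a j) (hc : nle c j) :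
    a * (sinv c * c) = c * (sinv a * a) := by
  calc a * (sinv c * c) = j * (sinv a * a) * (sinv c * c) := by rw [ha.mul_sinv_mul_self_eq]
    _ = j * ((sinv c * c) * (sinv a * a)) := by
        rw [mul_assoc, (idem_sinv_mul_self a).comm (idem_sinv_mul_self c)]
    _ = c * (sinv a * a) := by rw [← mul_assoc, hc.mul_sinv_mul_self_eq]

lemma isFilter_principal (s : S) : IsFilter {x : S | nle s x} :=
  ⟨⟨s, nle_refl s⟩, fun _ ha _ hb => ⟨s, nle_refl s, ha, hb⟩, fun _ ha _ hab => ha.trans hab⟩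

lemma isFilter_sUnion_of_isChain {c : Set (Set S)} (hc : ∀ F ∈ c, IsFilter F)
    (hchain : IsChain (· ⊆ ·) c) (hne : c.Nonempty) : IsFilter (⋃₀ c) := by
  obtain ⟨F₀, hF₀⟩ := hne
  obtain ⟨x, hx⟩ := (hc F₀ hF₀).1
  refine ⟨⟨x, F₀, hF₀, hx⟩, ?_, ?_⟩
  · rintro a ⟨Fa, hFa, ha⟩ b ⟨Fb, hFb, hb⟩
    have hdir : ∀ G ∈ c, a ∈ G → b ∈ G → ∃ z ∈ ⋃₀ c, nle z a ∧ nle z b := fun G hG ha hb =>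
      let ⟨z, hz, hza, hzb⟩ := (hc G hG).2.1 a ha b hb
      ⟨z, ⟨G, hG, hz⟩, hza, hzb⟩
    rcases hchain.total hFa hFb with hab | hba
    · exact hdir Fb hFb (hab ha) hb
    · exact hdir Fa hFa ha (hba hb)
  · rintro a ⟨F, hF, ha⟩ b hab
    exact ⟨F, hF, (hc F hF).2.2 a ha b hab⟩

lemma exists_maximal_filter_of_not_nle {s t : S} (h : ¬ nle s t) :
    ∃ F : Set S, Maximal (fun F => IsFilter F ∧ s ∈ F ∧ t ∉ F) F := by
  set 𝒮 := {F : Set S | IsFilter F ∧ s ∈ F ∧ t ∉ F}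
  have hchain : ∀ c ⊆ 𝒮, IsChain (· ⊆ ·) c → c.Nonempty → ∃ ub ∈ 𝒮, ∀ F ∈ c, F ⊆ ub := by
    rintro c hc hchain ⟨F₀, hF₀⟩
    refine ⟨⋃₀ c, ⟨?_, ⟨F₀, hF₀, (hc hF₀).2.1⟩, ?_⟩, fun _ => Set.subset_sUnion_of_mem⟩
    · exact isFilter_sUnion_of_isChain (fun F hF => (hc hF).1) hchain ⟨F₀, hF₀⟩
    · rintro ⟨F, hF, ht⟩
      exact (hc hF).2.2 ht
  obtain ⟨F, -, hF⟩ := zorn_subset_nonempty 𝒮 hchain {x | nle s x}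
    ⟨isFilter_principal s, nle_refl s, h⟩
  exact ⟨F, hF⟩

end InverseSemigroup

section WithZero
variable [InverseSemigroupWithZero S]

lemma zero_nle (a : S) : nle (0 : S) a :=
  ⟨0, InverseSemigroupWithZero.zmul 0, (InverseSemigroupWithZero.mulz a).symm⟩

lemma mem_filterMul_singleton {F : Set S} {e x : S} :
    x ∈ filterMul F {e} ↔ ∃ c ∈ F, nle (c * e) x := by
  simp [filterMul]

lemma IsFilter.filterMul_singleton {F : Set S} (hF : IsFilter F) {e : S} (he : idem e) :
    IsFilter (filterMul F {e}) := by
  obtain ⟨f, hf⟩ := hF.1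
  refine ⟨⟨f * e, mem_filterMul_singleton.2 ⟨f, hf, nle_refl _⟩⟩, ?_, ?_⟩
  · intro a ha b hb
    obtain ⟨c₁, hc₁, h₁⟩ := mem_filterMul_singleton.1 ha
    obtain ⟨c₂, hc₂, h₂⟩ := mem_filterMul_singleton.1 hb
    obtain ⟨c, hc, hcc₁, hcc₂⟩ := hF.2.1 c₁ hc₁ c₂ hc₂
    exact ⟨c * e, mem_filterMul_singleton.2 ⟨c, hc, nle_refl _⟩,
      (hcc₁.mul_idem he).trans h₁, (hcc₂.mul_idem he).trans h₂⟩
  · intro a ha b hab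
    obtain ⟨c, hc, hca⟩ := mem_filterMul_singleton.1 ha
    exact mem_filterMul_singleton.2 ⟨c, hc, hca.trans hab⟩

lemma subset_filterMul_singleton {F : Set S} {e : S} (he : idem e) : F ⊆ filterMul F {e} :=
  fun f hf => mem_filterMul_singleton.2 ⟨f, hf, nle_mul_of_idem f he⟩

lemma mem_filterMul_sinv_mul_self {F : Set S} {u j : S} (huj : nle u j) (hj : j ∈ F) :
    u ∈ filterMul F {sinv u * u} :=
  mem_filterMul_singleton.2 ⟨j, hj, by rw [huj.mul_sinv_mul_self_eq]; exact nle_refl u⟩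

lemma exists_mul_sinv_mul_self_nle_of_maximal {s t : S} {F : Set S}
    (hF : Maximal (fun F => IsFilter F ∧ s ∈ F ∧ t ∉ F) F) {u j : S} (huj : nle u j)
    (hj : j ∈ F) (hu : u ∉ F) : ∃ c ∈ F, nle (c * (sinv u * u)) t := by
  have he := idem_sinv_mul_self u
  refine mem_filterMul_singleton.1 ?_
  by_contra ht
  have hG : F = filterMul F {sinv u * u} := hF.eq_of_subset
    ⟨hF.1.1.filterMul_singleton he, subset_filterMul_singleton he hF.1.2.1, ht⟩
    (subset_filterMul_singleton he)
  exact hu (hG ▸ mem_filterMul_sinv_mul_self huj hj)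

end WithZero

section Distributive
variable [DistributiveInverseSemigroup S]

lemma isPrimeFilter_of_maximal {s t : S} {F : Set S}
    (hF : Maximal (fun F => IsFilter F ∧ s ∈ F ∧ t ∉ F) F) : IsPrimeFilter F := by
  obtain ⟨hFil, -, ht⟩ := hF.1
  refine ⟨⟨hFil, fun h0 => ht (hFil.2.2 0 h0 t (zero_nle t))⟩, fun a b j hjoin hj => ?_⟩
  by_contra! hab
  obtain ⟨c₁, hc₁, h₁⟩ := exists_mul_sinv_mul_self_nle_of_maximal hF hjoin.1 hj hab.1
  obtain ⟨c₂, hc₂, h₂⟩ := exists_mul_sinv_mul_self_nle_of_maximal hF hjoin.2.1 hj hab.2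
  obtain ⟨c₁₂, hc₁₂, hc₁₂c₁, hc₁₂c₂⟩ := hFil.2.1 c₁ hc₁ c₂ hc₂
  obtain ⟨c, hc, hcc₁₂, hcj⟩ := hFil.2.1 c₁₂ hc₁₂ j hj
  have hbound : ∀ {x c' : S}, nle x j → nle c c' → nle (c' * (sinv x * x)) t →
      nle (x * (sinv c * c)) t := by
    intro x c' hx hcc' h
    rw [mul_sinv_mul_self_comm_of_nle hx hcj]
    exact (hcc'.mul_idem (idem_sinv_mul_self x)).trans h
  have hjoin' : isJoin (a * (sinv c * c)) (b * (sinv c * c)) c := by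
    have h := DistributiveInverseSemigroup.mul_distrib_right a b j (sinv c * c)
      (compatible_of_nle_of_nle hjoin.1 hjoin.2.1) hjoin
    rwa [hcj.mul_sinv_mul_self_eq] at h
  have hct : nle c t := hjoin'.2.2 t (hbound hjoin.1 (hcc₁₂.trans hc₁₂c₁) h₁)
    (hbound hjoin.2.1 (hcc₁₂.trans hc₁₂c₂) h₂)
  exact ht (hFil.2.2 c hc t hct)

lemma exists_isPrimeFilter_of_not_nle {s t : S} (h : ¬ nle s t) :
    ∃ F : Set S, IsPrimeFilter F ∧ s ∈ F ∧ t ∉ F :=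
  let ⟨F, hF⟩ := exists_maximal_filter_of_not_nle h
  ⟨F, isPrimeFilter_of_maximal hF, hF.1.2⟩

lemma Xset_subset_Xset_iff (s t : S) : Xset s ⊆ Xset t ↔ nle s t := by
  refine ⟨fun hsub => ?_, fun hst F ⟨hF, hs⟩ => ⟨hF, hF.1.1.2.2 s hs t hst⟩⟩
  by_contra h
  obtain ⟨F, hF, hs, ht⟩ := exists_isPrimeFilter_of_not_nle h
  exact ht (hsub ⟨hF, hs⟩).2

end Distributive

/-- For a distributive inverse semigroup, `X_s ⊆ X_t` iff `s ≤ t`,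
and `X_s = X_t` iff `s = t`. -/
theorem stmt14 {S : Type*} [DistributiveInverseSemigroup S] (s t : S) :
    (Xset s ⊆ Xset t ↔ nle s t) ∧ (Xset s = Xset t ↔ s = t) := by
  refine ⟨Xset_subset_Xset_iff s t, fun h => ?_, fun h => h ▸ rfl⟩
  exact ((Xset_subset_Xset_iff s t).1 h.subset).antisymm
    ((Xset_subset_Xset_iff t s).1 h.superset)

end InvPaper
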